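/- arXiv:2004.07839 — 4 statements merged into one kernel-verified Lean document; each statement's English description precedes it below -/
import Mathlib

section
/- Let S be a finite multiset of pairs (a,w) with a ∈ ℝ^d and w ∈ ℝ, where each pair defines the halfspace hs_{a,w} = {x ∈ ℝ^d : ⟨a,x⟩ ≥ w}. Define depth_S(x) as the number of pairs (a,w) in S with x ∈ hs_{a,w}, and for k ∈ ℕ let D_S(k) = {x : depth_S(x) ≥ k} and C_S(k) = ConvexHull(D_S(k)). Define cdepth_S(x) = max{k : x ∈ C_S(k)}. Then for every x ∈ ℝ^d, depth_S(x) ≥ (d+1)·cdepth_S(x) − d·|S|. -/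
open scoped Classical

/-- Number of constraints `(a, w)` in `S` satisfied by `x`, i.e. with `⟨a, x⟩ ≥ w`. -/
noncomputable def depth {d : ℕ} (S : Multiset ((Fin d → ℝ) × ℝ)) (x : Fin d → ℝ) : ℕ :=
  (S.filter (fun p => p.2 ≤ ∑ j, p.1 j * x j)).card

/-- Convex-hull depth: the largest `k` such that `x` is in the convex hull of the
set of points of depth at least `k`. -/
noncomputable def cdepth {d : ℕ} (S : Multiset ((Fin d → ℝ) × ℝ)) (x : Fin d → ℝ) : ℕ :=
  sSup {k : ℕ | x ∈ convexHull ℝ {y | k ≤ depth S y}}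

lemma depth_le_card {d : ℕ} (S : Multiset ((Fin d → ℝ) × ℝ)) (x : Fin d → ℝ) :
    depth S x ≤ S.card := Multiset.card_le_card (Multiset.filter_le _ _)

/-- counting lemma -/
lemma count_lemma {d : ℕ} (S : Multiset ((Fin d → ℝ) × ℝ)) (x : Fin d → ℝ)
    (t : Finset (Fin d → ℝ))
    (h : ∀ p ∈ S, ¬ p.2 ≤ ∑ j, p.1 j * x j → ∃ y ∈ t, ¬ p.2 ≤ ∑ j, p.1 j * y j) :
    (S.card : ℤ) - depth S x ≤ ∑ y ∈ t, ((S.card : ℤ) - depth S y) := by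
  have key : ∀ T : Multiset ((Fin d → ℝ) × ℝ),
      (∀ p ∈ T, ¬ p.2 ≤ ∑ j, p.1 j * x j → ∃ y ∈ t, ¬ p.2 ≤ ∑ j, p.1 j * y j) →
      ((T.filter (fun p => ¬ p.2 ≤ ∑ j, p.1 j * x j)).card : ℤ) ≤
        ∑ y ∈ t, ((T.filter (fun p => ¬ p.2 ≤ ∑ j, p.1 j * y j)).card : ℤ) := by
    intro T
    induction T using Multiset.induction with
    | empty => simp
    | cons a T ih =>
      intro hT
      have h1 := ih (fun p hp => hT p (Multiset.mem_cons_of_mem hp))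
      by_cases ha : ¬ a.2 ≤ ∑ j, a.1 j * x j
      · obtain ⟨y0, hy0, hy0v⟩ := hT a (Multiset.mem_cons_self _ _) ha
        rw [Multiset.filter_cons_of_pos (p := fun q : (Fin d → ℝ) × ℝ => ¬ q.2 ≤ ∑ j, q.1 j * x j) T ha]
        have : ∀ y ∈ t, ((T.filter (fun p => ¬ p.2 ≤ ∑ j, p.1 j * y j)).card : ℤ) ≤
            (((a ::ₘ T).filter (fun p => ¬ p.2 ≤ ∑ j, p.1 j * y j)).card : ℤ) := by
          intro y _
          exact_mod_cast Multiset.card_le_card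
            (Multiset.filter_le_filter _ (Multiset.le_cons_self _ _))
        rw [Multiset.card_cons]
        push_cast
        calc ((Multiset.filter (fun q : (Fin d → ℝ) × ℝ => ¬ q.2 ≤ ∑ j, q.1 j * x j) T).card + 1 : ℤ)
            ≤ (∑ y ∈ t, ((T.filter (fun p => ¬ p.2 ≤ ∑ j, p.1 j * y j)).card : ℤ)) + 1 := by
              simpa using h1
          _ ≤ ∑ y ∈ t, (((a ::ₘ T).filter (fun p => ¬ p.2 ≤ ∑ j, p.1 j * y j)).card : ℤ) := by
              have hsplit : ∑ y ∈ t, (((a ::ₘ T).filter (fun p => ¬ p.2 ≤ ∑ j, p.1 j * y j)).card : ℤ)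
                  = (((a ::ₘ T).filter (fun p => ¬ p.2 ≤ ∑ j, p.1 j * y0 j)).card : ℤ)
                    + ∑ y ∈ t.erase y0, (((a ::ₘ T).filter (fun p => ¬ p.2 ≤ ∑ j, p.1 j * y j)).card : ℤ) :=
                (Finset.add_sum_erase _ _ hy0).symm
              rw [hsplit]
              have h2 : (((a ::ₘ T).filter (fun p => ¬ p.2 ≤ ∑ j, p.1 j * y0 j)).card : ℤ)
                  = ((T.filter (fun p => ¬ p.2 ≤ ∑ j, p.1 j * y0 j)).card : ℤ) + 1 := by
                rw [Multiset.filter_cons_of_pos (p := fun q : (Fin d → ℝ) × ℝ => ¬ q.2 ≤ ∑ j, q.1 j * y0 j) T hy0v]; push_cast [Multiset.card_cons]; ring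
              rw [h2]
              have h3 : ∑ y ∈ t, ((T.filter (fun p => ¬ p.2 ≤ ∑ j, p.1 j * y j)).card : ℤ)
                  = ((T.filter (fun p => ¬ p.2 ≤ ∑ j, p.1 j * y0 j)).card : ℤ)
                    + ∑ y ∈ t.erase y0, ((T.filter (fun p => ¬ p.2 ≤ ∑ j, p.1 j * y j)).card : ℤ) :=
                (Finset.add_sum_erase _ _ hy0).symm
              rw [h3]
              have h4 : ∑ y ∈ t.erase y0, ((T.filter (fun p => ¬ p.2 ≤ ∑ j, p.1 j * y j)).card : ℤ)
                  ≤ ∑ y ∈ t.erase y0, (((a ::ₘ T).filter (fun p => ¬ p.2 ≤ ∑ j, p.1 j * y j)).card : ℤ) :=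
                Finset.sum_le_sum (fun y hy => this y (Finset.mem_of_mem_erase hy))
              linarith
      · rw [Multiset.filter_cons_of_neg (p := fun q : (Fin d → ℝ) × ℝ => ¬ q.2 ≤ ∑ j, q.1 j * x j) T ha]
        refine le_trans h1 (Finset.sum_le_sum fun y _ => ?_)
        exact_mod_cast Multiset.card_le_card
          (Multiset.filter_le_filter _ (Multiset.le_cons_self _ _))
  have hfc : ∀ z : Fin d → ℝ, ((S.filter (fun p => ¬ p.2 ≤ ∑ j, p.1 j * z j)).card : ℤ)
      = (S.card : ℤ) - depth S z := by
    intro z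
    have := Multiset.filter_add_not (fun p : (Fin d → ℝ) × ℝ => p.2 ≤ ∑ j, p.1 j * z j) S
    have hc : depth S z + (S.filter (fun p => ¬ p.2 ≤ ∑ j, p.1 j * z j)).card = S.card := by
      rw [depth, ← Multiset.card_add, this]
    omega
  have := key S h
  rw [hfc x] at this
  calc (S.card : ℤ) - depth S x ≤ ∑ y ∈ t, ((S.filter (fun p => ¬ p.2 ≤ ∑ j, p.1 j * y j)).card : ℤ) := this
    _ = ∑ y ∈ t, ((S.card : ℤ) - depth S y) := Finset.sum_congr rfl (fun y _ => hfc y)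

theorem stmt_0 {d : ℕ} (S : Multiset ((Fin d → ℝ) × ℝ)) (x : Fin d → ℝ) :
    ((d : ℤ) + 1) * cdepth S x - d * S.card ≤ (depth S x : ℤ) := by
  set k := cdepth S x with hk
  -- the set is nonempty and bounded above
  have hne : (0 : ℕ) ∈ {k : ℕ | x ∈ convexHull ℝ {y | k ≤ depth S y}} := by
    have : {y : Fin d → ℝ | 0 ≤ depth S y} = Set.univ := by
      ext y; simp
    simp only [Set.mem_setOf_eq, this]
    exact subset_convexHull ℝ _ (Set.mem_univ x)
  have hbdd : BddAbove {k : ℕ | x ∈ convexHull ℝ {y | k ≤ depth S y}} := by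
    refine ⟨S.card, fun m hm => ?_⟩
    by_contra hlt
    push_neg at hlt
    have hempty : {y : Fin d → ℝ | m ≤ depth S y} = ∅ := by
      ext y; simp only [Set.mem_setOf_eq, Set.mem_empty_iff_false, iff_false, not_le]
      exact lt_of_le_of_lt (depth_le_card S y) hlt
    simp only [Set.mem_setOf_eq, hempty] at hm
    simp at hm
  have hkmem : k ∈ {k : ℕ | x ∈ convexHull ℝ {y | k ≤ depth S y}} :=
    Nat.sSup_mem ⟨0, hne⟩ hbdd
  have hx : x ∈ convexHull ℝ {y | k ≤ depth S y} := hkmem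
  rw [convexHull_eq_union] at hx
  simp only [Set.mem_iUnion, exists_prop] at hx
  obtain ⟨t, hts, hai, hxt⟩ := hx
  -- card bound
  have hcard : t.card ≤ d + 1 := by
    have h1 := hai.card_le_finrank_succ
    have h2 : Module.finrank ℝ (vectorSpan ℝ (Set.range ((↑) : t → Fin d → ℝ))) ≤ d := by
      have h3 := Submodule.finrank_le (vectorSpan ℝ (Set.range ((↑) : t → Fin d → ℝ)))
      simpa [Module.finrank_fin_fun] using h3
    rw [Fintype.card_coe] at h1
    omega
  -- t nonempty
  have htne : t.Nonempty := by
    rcases Finset.eq_empty_or_nonempty t with h | h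
    · subst h; simp at hxt
    · exact h
  -- depth bound for members
  have hdep : ∀ y ∈ t, k ≤ depth S y := fun y hy => hts hy
  have hkcard : k ≤ S.card := by
    obtain ⟨y, hy⟩ := htne
    exact le_trans (hdep y hy) (depth_le_card S y)
  -- every violated constraint of x is violated by some member of t
  have hviol : ∀ p ∈ S, ¬ p.2 ≤ ∑ j, p.1 j * x j → ∃ y ∈ t, ¬ p.2 ≤ ∑ j, p.1 j * y j := by
    intro p _ hp
    by_contra hno
    push_neg at hno
    apply hp
    have hconv : Convex ℝ {y : Fin d → ℝ | p.2 ≤ ∑ j, p.1 j * y j} := by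
      have hlin : IsLinearMap ℝ (fun y : Fin d → ℝ => ∑ j, p.1 j * y j) := by
        constructor
        · intro a b; simp [mul_add, Finset.sum_add_distrib]
        · intro c a; simp [Finset.mul_sum, mul_comm, mul_assoc, mul_left_comm]
      exact convex_halfSpace_ge hlin p.2
    have : (t : Set (Fin d → ℝ)) ⊆ {y : Fin d → ℝ | p.2 ≤ ∑ j, p.1 j * y j} := by
      intro y hy; exact hno y hy
    have := convexHull_min this hconv hxt
    exact this
  have hmain := count_lemma S x t hviol
  have hstep : ∑ y ∈ t, ((S.card : ℤ) - depth S y) ≤ t.card * ((S.card : ℤ) - k) := by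
    calc ∑ y ∈ t, ((S.card : ℤ) - depth S y) ≤ ∑ _y ∈ t, ((S.card : ℤ) - k) :=
          Finset.sum_le_sum (fun y hy => by
            have := hdep y hy; omega)
      _ = t.card * ((S.card : ℤ) - k) := by rw [Finset.sum_const, nsmul_eq_mul]
  have hfinal : (t.card : ℤ) * ((S.card : ℤ) - k) ≤ ((d : ℤ) + 1) * ((S.card : ℤ) - k) := by
    apply mul_le_mul_of_nonneg_right
    · exact_mod_cast hcard
    · omega
  linarith
end

section
/- Let X ∈ ℕ, X = {−X,…,X}, and let S ∈ (X^d × {−1,1})^* be a realizable dataset of labeled grid points, i.e., there exists a halfspace hs ⊂ ℝ^d such that every (x,1) ∈ S satisfies x ∈ hs and every (x,−1) ∈ S satisfies x ∉ hs. Then there exists a halfspace hs' with val_S(hs') = |S| such that every point x appearing in S satisfies dist(x, ∂hs') ≥ 1/X', where X' = 2d²·(d!)^{d³}·X^{d⁶}. Equivalently, a perfectly classifying halfspace exists with margin at least 1/(d·X)^{poly(d)}. -/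
/-!
A labelled point `(x, ±1)` is homogenized to the integer vector `±(x, -1)`, so that a halfspace
`⟨a, x⟩ ≥ w` separating the data with a unit gap is exactly a solution `b = (a, w)` of the integer
system `⟨b, v⟩ ≥ 1`, which realizability makes feasible. Moving a feasible `b` along a direction
that vanishes on its tight constraints until another constraint becomes tight raises the rank of
the tight set, so some solution has tight constraints spanning all constraint vectors. Then every
`b` with `⟨b, tᵢ⟩ = 1` on a linearly independent family of tight `tᵢ` is again a solution; taking
`b = Tᵀ c` with `(T Tᵀ) c = 1`, Cramer's rule and `|det (T Tᵀ)| ≥ 1` (an integer) bound its entries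
by `n · n! · (n X²)ⁿ · X`, `n = d + 1`. A unit gap and `|aⱼ| ≤ K` keep every data point at
distance at least `1 / (d K)` from the hyperplane. For `d = 1` this bound is too weak, but there
the threshold can be moved to a half-integer.
-/

open Submodule Module Matrix Nat Filter Topology

section Vertex

variable {𝕜 : Type*} [Field 𝕜] [LinearOrder 𝕜] [IsStrictOrderedRing 𝕜]

theorem exists_nonneg_step_to_boundary {ι : Type*} [Finite ι] (α β : ι → 𝕜)
    (hα : ∀ i, 0 ≤ α i) (hβ : ∃ i, β i < 0) :
    ∃ t, 0 ≤ t ∧ (∀ i, 0 ≤ α i + t * β i) ∧ ∃ i, β i < 0 ∧ α i + t * β i = 0 := by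
  classical
  have := Fintype.ofFinite ι
  obtain ⟨i₀, hi₀, hmin⟩ := (Finset.univ.filter fun i => β i < 0).exists_min_image
    (fun i => α i / -β i) (by simpa [Finset.Nonempty] using hβ)
  simp only [Finset.mem_filter, Finset.mem_univ, true_and] at hi₀ hmin
  have ht : 0 ≤ α i₀ / -β i₀ := div_nonneg (hα i₀) (neg_nonneg.mpr hi₀.le)
  refine ⟨α i₀ / -β i₀, ht, fun i => ?_, i₀, hi₀, ?_⟩
  · rcases lt_or_ge (β i) 0 with hi | hi
    · linarith [(le_div_iff₀ (neg_pos.mpr hi)).mp (hmin i hi)]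
    · exact add_nonneg (hα i) (mul_nonneg ht hi)
  · linarith [div_mul_cancel₀ (α i₀) (neg_ne_zero.mpr hi₀.ne)]

variable {E : Type*} [AddCommGroup E] [Module 𝕜 E]

theorem Submodule.exists_dual_neg_of_notMem {p : Submodule 𝕜 E} {x : E} (hx : x ∉ p) :
    ∃ h : Dual 𝕜 E, h x < 0 ∧ ∀ y ∈ p, h y = 0 := by
  obtain ⟨h, hhx, hp⟩ := exists_dual_map_eq_bot_of_notMem hx inferInstance
  have hvanish : ∀ y ∈ p, h y = 0 := fun y hy => by
    simpa [hp] using mem_map_of_mem (f := h) hy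
  rcases hhx.lt_or_gt with hneg | hpos
  · exact ⟨h, hneg, hvanish⟩
  · exact ⟨-h, by simpa using hpos, fun y hy => by simp [hvanish y hy]⟩

variable {ι : Type*} [Finite ι]

def tightSpan (v : ι → E) (f : Dual 𝕜 E) : Submodule 𝕜 E :=
  span 𝕜 (Set.range fun i : {i // f (v i) = 1} => v i)

instance (v : ι → E) (f : Dual 𝕜 E) : FiniteDimensional 𝕜 (tightSpan v f) :=
  FiniteDimensional.span_of_finite 𝕜 (Set.finite_range _)

theorem exists_tightSpan_lt (v : ι → E) {f : Dual 𝕜 E} (hf : ∀ i, 1 ≤ f (v i)) {i₀ : ι}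
    (hi₀ : v i₀ ∉ tightSpan v f) :
    ∃ g : Dual 𝕜 E, (∀ i, 1 ≤ g (v i)) ∧ tightSpan v f < tightSpan v g := by
  obtain ⟨h, hneg, hvanish⟩ := exists_dual_neg_of_notMem hi₀
  obtain ⟨t, -, hfeas, i₁, hi₁, htight⟩ :=
    exists_nonneg_step_to_boundary (fun i => f (v i) - 1) (fun i => h (v i))
      (fun i => sub_nonneg.mpr (hf i)) ⟨i₀, hneg⟩
  have happly : ∀ i, (f + t • h) (v i) = f (v i) + t * h (v i) := fun _ => rfl
  refine ⟨f + t • h, fun i => by linarith [happly i, hfeas i], lt_of_le_of_ne ?_ fun heq => ?_⟩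
  · refine span_mono (Set.range_subset_iff.mpr fun i => ⟨⟨i.1, ?_⟩, rfl⟩)
    rw [happly, hvanish _ (subset_span ⟨i, rfl⟩), mul_zero, add_zero, i.2]
  · have : v i₁ ∈ tightSpan v (f + t • h) :=
      subset_span ⟨⟨i₁, by linarith [happly i₁]⟩, rfl⟩
    rw [← heq] at this
    exact hi₁.ne (hvanish _ this)

theorem exists_dual_mem_tightSpan (v : ι → E) {f : Dual 𝕜 E} (hf : ∀ i, 1 ≤ f (v i)) :
    ∃ g : Dual 𝕜 E, (∀ i, 1 ≤ g (v i)) ∧ ∀ i, v i ∈ tightSpan v g := by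
  by_contra! hcon
  have := Fintype.ofFinite ι
  have hgrow : ∀ k : ℕ, ∃ g : Dual 𝕜 E, (∀ i, 1 ≤ g (v i)) ∧ k ≤ finrank 𝕜 (tightSpan v g) := by
    intro k
    induction k with
    | zero => exact ⟨f, hf, Nat.zero_le _⟩
    | succ k ih =>
      obtain ⟨g, hg, hk⟩ := ih
      obtain ⟨i₀, hi₀⟩ := hcon g hg
      obtain ⟨g', hg', hlt⟩ := exists_tightSpan_lt v hg hi₀
      exact ⟨g', hg', hk.trans_lt (finrank_lt_finrank_of_lt hlt)⟩
  obtain ⟨g, -, hg⟩ := hgrow (Fintype.card ι + 1)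
  have : finrank 𝕜 (tightSpan v g) ≤ Fintype.card ι :=
    (finrank_range_le_card (R := 𝕜) _).trans (Fintype.card_subtype_le _)
  omega

end Vertex

theorem Matrix.det_mul_transpose_ne_zero {ι n : Type*} [Fintype ι] [DecidableEq ι] [Fintype n]
    {A : Matrix ι n ℝ} (hA : LinearIndependent ℝ A.row) : (A * Aᵀ).det ≠ 0 := by
  rw [← isUnit_iff_ne_zero, ← isUnit_iff_isUnit_det, ← linearIndependent_rows_iff_isUnit,
    linearIndependent_iff_card_eq_finrank_span, Set.finrank, ← rank_eq_finrank_span_row,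
    rank_self_mul_transpose, hA.rank_matrix]

theorem Matrix.abs_mul_transpose_apply_le {ι n : Type*} [Fintype n] {A : Matrix ι n ℝ} {B : ℝ}
    (hA : ∀ i j, |A i j| ≤ B) (i j : ι) : |(A * Aᵀ) i j| ≤ Fintype.card n * B ^ 2 := by
  rw [mul_apply]
  calc |∑ k, A i k * Aᵀ k j| ≤ ∑ k, |A i k * Aᵀ k j| := Finset.abs_sum_le_sum_abs _ _
    _ ≤ ∑ _k : n, B ^ 2 := by
        gcongr with k
        rw [abs_mul, sq]
        exact mul_le_mul (hA i k) (hA j k) (abs_nonneg _) ((abs_nonneg _).trans (hA i k))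
    _ = _ := by simp

theorem Matrix.abs_cramer_apply_le {ι : Type*} [Fintype ι] [DecidableEq ι] {G : Matrix ι ι ℝ}
    {M : ℝ} (hM : 1 ≤ M) (hG : ∀ i j, |G i j| ≤ M) (b : ι → ℝ) (hb : ∀ i, |b i| ≤ 1) (i : ι) :
    |G.cramer b i| ≤ (Fintype.card ι)! * M ^ Fintype.card ι := by
  rw [cramer_apply, ← nsmul_eq_mul]
  refine det_le (abv := AbsoluteValue.abs) fun k l => ?_
  rw [updateCol_apply]
  split_ifs
  · exact (hb k).trans hM
  · exact hG k l

theorem Matrix.one_le_abs_det_map_mul_transpose {ι n : Type*} [Fintype ι] [DecidableEq ι]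
    [Fintype n] (A : Matrix ι n ℤ) (hA : LinearIndependent ℝ (A.map (Int.cast : ℤ → ℝ)).row) :
    1 ≤ |(A.map (Int.cast : ℤ → ℝ) * (A.map (Int.cast : ℤ → ℝ))ᵀ).det| := by
  have hcast : (A.map (Int.cast : ℤ → ℝ) * (A.map (Int.cast : ℤ → ℝ))ᵀ).det =
      ((A * Aᵀ).det : ℝ) := by
    have := RingHom.map_det (Int.castRingHom ℝ) (A * Aᵀ)
    rw [RingHom.mapMatrix_apply, Matrix.map_mul, transpose_map] at this
    exact this.symm
  have hne : (A * Aᵀ).det ≠ 0 := fun h =>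
    det_mul_transpose_ne_zero hA (by rw [hcast, h, Int.cast_zero])
  rw [hcast, ← Int.cast_abs]
  exact_mod_cast Int.one_le_abs hne

theorem exists_bounded_mulVec_eq_one {ι : Type*} [Fintype ι] [DecidableEq ι] {n B : ℕ}
    (A : Matrix ι (Fin n) ℤ) (hA : LinearIndependent ℝ (A.map (Int.cast : ℤ → ℝ)).row)
    (hB : 1 ≤ B) (hAB : ∀ i j, |A i j| ≤ B) :
    ∃ b : Fin n → ℝ, A.map (Int.cast : ℤ → ℝ) *ᵥ b = 1 ∧
      ∀ j, |b j| ≤ n * n ! * (n * B ^ 2) ^ n * B := by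
  set Ar := A.map (Int.cast : ℤ → ℝ)
  set G := Ar * Arᵀ
  have hArB : ∀ i j, |Ar i j| ≤ B := fun i j => by
    show |(A i j : ℝ)| ≤ B
    exact_mod_cast hAB i j
  have hdet : 1 ≤ |G.det| := one_le_abs_det_map_mul_transpose A hA
  have hcard : Fintype.card ι ≤ n := by simpa using hA.fintype_card_le_finrank
  -- the solution `Arᵀ G⁻¹ 1` of `Ar b = 1`, with `G⁻¹ 1` written by Cramer's rule
  set c := G.cramer 1
  refine ⟨G.det⁻¹ • (Arᵀ *ᵥ c), ?_, fun j => ?_⟩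
  · rw [mulVec_smul, mulVec_mulVec, mulVec_cramer, smul_smul,
      inv_mul_cancel₀ (abs_pos.mp (one_pos.trans_le hdet)), one_smul]
  have hn : 1 ≤ (n : ℝ) * B ^ 2 := by
    have : (1 : ℝ) ≤ n := by exact_mod_cast Fin.pos j
    have : (1 : ℝ) ≤ B := by exact_mod_cast hB
    nlinarith
  have hc : ∀ i, |c i| ≤ n ! * (n * B ^ 2) ^ n := fun i =>
    (abs_cramer_apply_le hn (by simpa using abs_mul_transpose_apply_le hArB) _
      (fun _ => by simp) i).trans
      (mul_le_mul (by exact_mod_cast factorial_le hcard) (pow_le_pow_right₀ hn hcard)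
        (by positivity) (by positivity))
  calc |(G.det⁻¹ • (Arᵀ *ᵥ c)) j| ≤ |(Arᵀ *ᵥ c) j| := by
        rw [Pi.smul_apply, smul_eq_mul, abs_mul, abs_inv]
        exact mul_le_of_le_one_left (abs_nonneg _) (inv_le_one_of_one_le₀ hdet)
    _ ≤ ∑ i, |Ar i j| * |c i| := by
        simp only [mulVec, dotProduct, transpose_apply, ← abs_mul]
        exact Finset.abs_sum_le_sum_abs _ _
    _ ≤ ∑ _i : ι, (B : ℝ) * (n ! * (n * B ^ 2) ^ n) :=
        Finset.sum_le_sum fun i _ => mul_le_mul (hArB i j) (hc i) (abs_nonneg _) (by positivity)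
    _ ≤ n * ((B : ℝ) * (n ! * (n * B ^ 2) ^ n)) := by
        rw [Finset.sum_const, Finset.card_univ, nsmul_eq_mul]
        gcongr
    _ = n * n ! * (n * B ^ 2) ^ n * B := by ring

theorem exists_bounded_dotProduct_ge_one {n B : ℕ} (hB : 1 ≤ B) (V : Finset (Fin n → ℤ))
    (hVB : ∀ v ∈ V, ∀ j, |v j| ≤ B) (hfeas : ∃ b : Fin n → ℝ, ∀ v ∈ V, 1 ≤ b ⬝ᵥ (Int.cast ∘ v)) :
    ∃ b : Fin n → ℝ, (∀ v ∈ V, 1 ≤ b ⬝ᵥ (Int.cast ∘ v)) ∧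
      ∀ j, |b j| ≤ n * n ! * (n * B ^ 2) ^ n * B := by
  classical
  obtain ⟨b₀, hb₀⟩ := hfeas
  let v : V → Fin n → ℝ := fun z => Int.cast ∘ z.1
  obtain ⟨g, hg, hspan⟩ := exists_dual_mem_tightSpan v (f := dotProductBilin ℝ ℝ b₀)
    fun z => hb₀ z z.2
  obtain ⟨κ, a, ha, hκspan, hκind⟩ :=
    exists_linearIndependent' ℝ (fun i : {i // g (v i) = 1} => v i)
  have := Finite.of_injective a ha
  have := Fintype.ofFinite κ
  let A : Matrix κ (Fin n) ℤ := fun k => (a k).1.1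
  obtain ⟨b, hb, hbB⟩ := exists_bounded_mulVec_eq_one A hκind hB fun k => hVB _ (a k).1.2
  refine ⟨b, fun z hz => ?_, hbB⟩
  -- `b` and `g` agree on the independent tight vectors, hence on the span of all tight vectors
  have hle : tightSpan v g ≤ LinearMap.ker (dotProductBilin ℝ ℝ b - g) := by
    rw [tightSpan, ← hκspan, span_le, Set.range_subset_iff]
    intro k
    simp only [SetLike.mem_coe, LinearMap.mem_ker, LinearMap.sub_apply,
      dotProductBilin_apply_apply, sub_eq_zero, Function.comp_apply, (a k).2, dotProduct_comm b]
    exact congrFun hb k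
  have hbz : b ⬝ᵥ v ⟨z, hz⟩ = g (v ⟨z, hz⟩) := by
    simpa [sub_eq_zero] using hle (hspan ⟨z, hz⟩)
  exact hbz ▸ hg ⟨z, hz⟩

theorem exists_int_threshold (α w : ℝ) :
    ∃ σ c : ℤ, |σ| ≤ 1 ∧ ∀ x : ℤ, w ≤ α * x ↔ c ≤ σ * x := by
  have hpos : ∀ α : ℝ, 0 < α → ∀ x : ℤ, w ≤ α * x ↔ ⌈w / α⌉ ≤ x := fun α hα x => by
    rw [Int.ceil_le, div_le_iff₀ hα, mul_comm]
  rcases lt_trichotomy α 0 with hα | rfl | hα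
  · refine ⟨-1, ⌈w / -α⌉, by simp, fun x => ?_⟩
    rw [neg_one_mul, ← hpos (-α) (neg_pos.mpr hα), Int.cast_neg, neg_mul_neg]
  · exact ⟨0, ⌈w⌉, by simp, fun x => by simp [Int.ceil_le]⟩
  · exact ⟨1, ⌈w / α⌉, by simp, fun x => by rw [one_mul, hpos α hα]⟩

theorem succ_mul_factorial_mul_pow_le {d X : ℕ} (hd : 2 ≤ d) (hX : 1 ≤ X) :
    (d + 1) * (d + 1)! * ((d + 1) * X ^ 2) ^ (d + 1) * X ≤ 2 * d * d ! ^ d ^ 3 * X ^ d ^ 6 := by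
  have hfac : (d + 1) ^ (d + 3) * d ! ≤ 2 * d * d ! ^ d ^ 3 := by
    rcases hd.eq_or_lt with rfl | hd3
    · decide
    · calc (d + 1) ^ (d + 3) * d ! ≤ d ! ^ (d + 3) * d ! := by
            gcongr; exact lt_factorial_self hd3
        _ = d ! ^ (d + 4) := by ring
        _ ≤ d ! ^ d ^ 3 := Nat.pow_le_pow_right (factorial_pos d) (by rw [pow_three]; nlinarith)
        _ ≤ 2 * d * d ! ^ d ^ 3 := Nat.le_mul_of_pos_left _ (by omega)
  have hexp : 2 * d + 3 ≤ d ^ 6 := calc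
    2 * d + 3 ≤ d ^ 3 := by rw [pow_three]; nlinarith
    _ ≤ d ^ 6 := Nat.pow_le_pow_right (by omega) (by norm_num)
  calc (d + 1) * (d + 1)! * ((d + 1) * X ^ 2) ^ (d + 1) * X
      = (d + 1) ^ (d + 3) * d ! * X ^ (2 * d + 3) := by
        rw [factorial_succ, mul_pow, ← pow_mul]; ring
    _ ≤ 2 * d * d ! ^ d ^ 3 * X ^ d ^ 6 := Nat.mul_le_mul hfac (Nat.pow_le_pow_right hX hexp)

theorem one_div_le_sqrt_of_one_le_abs_dotProduct {ι : Type*} [Fintype ι] {a u : ι → ℝ} {K : ℝ}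
    (ha : ∀ j, |a j| ≤ K) (h : 1 ≤ |a ⬝ᵥ u|) :
    1 / (Fintype.card ι * K) ≤ √(∑ j, u j ^ 2) := by
  have hu : ∀ j, |u j| ≤ √(∑ j, u j ^ 2) := fun j =>
    Real.abs_le_sqrt (Finset.single_le_sum (fun i _ => sq_nonneg (u i)) (Finset.mem_univ j))
  have hle : 1 ≤ Fintype.card ι * K * √(∑ j, u j ^ 2) := calc
    1 ≤ |a ⬝ᵥ u| := h
    _ ≤ ∑ j, |a j| * |u j| := by
        simp only [dotProduct, ← abs_mul]
        exact Finset.abs_sum_le_sum_abs _ _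
    _ ≤ ∑ _j : ι, K * √(∑ j, u j ^ 2) := Finset.sum_le_sum fun j _ =>
        mul_le_mul (ha j) (hu j) (abs_nonneg _) ((abs_nonneg _).trans (ha j))
    _ = Fintype.card ι * K * √(∑ j, u j ^ 2) := by simp [mul_assoc]
  rcases le_or_gt (Fintype.card ι * K) 0 with h0 | h0
  · exact (one_div_nonpos.mpr h0).trans (Real.sqrt_nonneg _)
  · rwa [div_le_iff₀' h0]

section Dataset

variable {d : ℕ}

def Separates (S : Multiset ((Fin d → ℤ) × Bool)) (a : Fin d → ℝ) (w : ℝ) : Prop :=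
  ∀ p ∈ S, (p.2 = true → w ≤ a ⬝ᵥ (Int.cast ∘ p.1)) ∧ (p.2 = false → a ⬝ᵥ (Int.cast ∘ p.1) < w)

def HasUnitGap (S : Multiset ((Fin d → ℤ) × Bool)) (a : Fin d → ℝ) (w : ℝ) : Prop :=
  ∀ p ∈ S, if p.2 then w + 1 ≤ a ⬝ᵥ (Int.cast ∘ p.1) else a ⬝ᵥ (Int.cast ∘ p.1) + 1 ≤ w

def signedLift (p : (Fin d → ℤ) × Bool) : Fin (d + 1) → ℤ :=
  (if p.2 then 1 else -1) • Fin.snoc p.1 (-1)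

variable {S : Multiset ((Fin d → ℤ) × Bool)} {a : Fin d → ℝ} {w : ℝ}

theorem HasUnitGap.separates (h : HasUnitGap S a w) : Separates S a w := fun p hp => by
  have := h p hp
  constructor <;> intro hp2 <;> simp only [hp2, if_true, Bool.false_eq_true, if_false] at this <;>
    linarith

theorem HasUnitGap.one_le_abs_dotProduct_sub (h : HasUnitGap S a w) {p : (Fin d → ℤ) × Bool}
    (hp : p ∈ S) {y : Fin d → ℝ} (hy : a ⬝ᵥ y = w) : 1 ≤ |a ⬝ᵥ (Int.cast ∘ p.1 - y)| := by
  have := h p hp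
  rw [dotProduct_sub, hy, le_abs]
  split_ifs at this
  exacts [Or.inl (by linarith), Or.inr (by linarith)]

theorem Separates.exists_hasUnitGap (h : Separates S a w) : ∃ a' w', HasUnitGap S a' w' := by
  obtain ⟨δ, hδ, hδpos⟩ : ∃ δ : ℝ, (∀ p ∈ S.toFinset, p.2 = false →
      a ⬝ᵥ (Int.cast ∘ p.1) + δ ≤ w) ∧ 0 < δ := by
    refine (((eventually_all_finset _).2 fun p hp => ?_).filter_mono nhdsWithin_le_nhds).and
      self_mem_nhdsWithin |>.exists (f := 𝓝[>] 0)
    by_cases hpf : p.2 = false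
    · filter_upwards [eventually_lt_nhds (sub_pos.mpr ((h p (Multiset.mem_toFinset.mp hp)).2 hpf))]
        with δ hδ
      intro; linarith
    · simp [hpf]
  refine ⟨(2 / δ) • a, 2 / δ * w - 1, fun p hp => ?_⟩
  have h2δ : 0 < 2 / δ := by positivity
  rw [smul_dotProduct, smul_eq_mul]
  cases hp2 : p.2
  · have := hδ p (Multiset.mem_toFinset.mpr hp) hp2
    simp only [Bool.false_eq_true, if_false]
    nlinarith [mul_div_cancel₀ (2 : ℝ) hδpos.ne']
  · have := (h p hp).1 hp2
    simp only [if_true]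
    nlinarith

theorem Separates.exists_hasUnitGap_abs_le_two {S : Multiset ((Fin 1 → ℤ) × Bool)}
    {a : Fin 1 → ℝ} (h : Separates S a w) : ∃ a' w', HasUnitGap S a' w' ∧ ∀ j, |a' j| ≤ 2 := by
  obtain ⟨σ, c, hσ, hc⟩ := exists_int_threshold (a 0) w
  have hσ' : |(σ : ℝ)| ≤ 1 := by exact_mod_cast hσ
  refine ⟨fun _ => 2 * σ, 2 * c - 1, fun p hp => ?_, fun _ => ?_⟩
  · have hdot : ∀ b : Fin 1 → ℝ, b ⬝ᵥ (Int.cast ∘ p.1) = b 0 * p.1 0 := fun b => by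
      simp [dotProduct]
    have hiff := hc (p.1 0)
    rw [← hdot] at hiff
    rw [hdot]
    cases hp2 : p.2
    · have := hiff.not.mp (not_le.mpr ((h p hp).2 hp2))
      simp only [Bool.false_eq_true, if_false, not_le] at this ⊢
      have : (σ : ℝ) * p.1 0 ≤ c - 1 := by exact_mod_cast Int.le_sub_one_of_lt this
      linarith
    · have := hiff.mp ((h p hp).1 hp2)
      simp only [if_true] at this ⊢
      have : (c : ℝ) ≤ σ * p.1 0 := by exact_mod_cast this
      linarith
  · rw [abs_mul, abs_two]
    linarith

theorem abs_signedLift_le {X : ℕ} (hX : 1 ≤ X) {p : (Fin d → ℤ) × Bool}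
    (hp : ∀ j, |p.1 j| ≤ X) (j : Fin (d + 1)) : |signedLift p j| ≤ X := by
  have hsign : |(if p.2 then 1 else -1 : ℤ)| = 1 := by split_ifs <;> simp
  rw [signedLift, Pi.smul_apply, smul_eq_mul, abs_mul, hsign, one_mul]
  induction j using Fin.lastCases with
  | last => simpa using hX
  | cast i => simpa using hp i

theorem snoc_dotProduct_signedLift (a : Fin d → ℝ) (w : ℝ) (p : (Fin d → ℤ) × Bool) :
    Fin.snoc a w ⬝ᵥ (Int.cast ∘ signedLift p) =
      (if p.2 then 1 else -1) * (a ⬝ᵥ (Int.cast ∘ p.1) - w) := by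
  simp only [dotProduct, Fin.sum_univ_castSucc, signedLift, Function.comp_apply, Pi.smul_apply,
    Fin.snoc_castSucc, Fin.snoc_last, smul_eq_mul]
  split_ifs <;> push_cast <;>
    simp only [one_mul, neg_one_mul, mul_neg, Finset.sum_neg_distrib] <;> ring

theorem hasUnitGap_iff_one_le_snoc_dotProduct :
    HasUnitGap S a w ↔ ∀ p ∈ S, 1 ≤ Fin.snoc a w ⬝ᵥ (Int.cast ∘ signedLift p) := by
  refine forall₂_congr fun p _ => ?_
  rw [snoc_dotProduct_signedLift]
  split_ifs <;> constructor <;> intro <;> linarith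

theorem HasUnitGap.exists_bounded {X : ℕ} (hX : 1 ≤ X) (hgrid : ∀ p ∈ S, ∀ j, |p.1 j| ≤ X)
    (h : HasUnitGap S a w) :
    ∃ a' w', HasUnitGap S a' w' ∧
      ∀ j, |a' j| ≤ (d + 1) * (d + 1)! * ((d + 1) * X ^ 2) ^ (d + 1) * X := by
  obtain ⟨b, hb, hbB⟩ := exists_bounded_dotProduct_ge_one hX (S.toFinset.image signedLift)
    (Finset.forall_mem_image.mpr fun p hp =>
      abs_signedLift_le hX (hgrid p (Multiset.mem_toFinset.mp hp)))
    ⟨Fin.snoc a w, Finset.forall_mem_image.mpr fun p hp =>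
      hasUnitGap_iff_one_le_snoc_dotProduct.mp h p (Multiset.mem_toFinset.mp hp)⟩
  refine ⟨Fin.init b, b (Fin.last d), ?_, fun j => by exact_mod_cast hbB _⟩
  rw [hasUnitGap_iff_one_le_snoc_dotProduct, Fin.snoc_init_self]
  exact fun p hp => hb _ (Finset.mem_image_of_mem _ (Multiset.mem_toFinset.mpr hp))

end Dataset

/-- Margin lemma: a realizable dataset of labeled grid points from `[-X, X]^d ∩ ℤ^d`
admits a perfectly classifying halfspace whose boundary hyperplane is at distance at
least `1 / (2d²·(d!)^{d³}·X^{d⁶})` from every data point.  Labels: `true` ↔ `+1`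
(point must lie in the halfspace), `false` ↔ `-1` (point must lie strictly outside). -/
theorem stmt_6 {d X : ℕ} (S : Multiset ((Fin d → ℤ) × Bool))
    (hgrid : ∀ p ∈ S, ∀ j, |p.1 j| ≤ (X : ℤ))
    (hrealizable : ∃ (a : Fin d → ℝ) (w : ℝ), ∀ p ∈ S,
      (p.2 = true → w ≤ ∑ j, a j * (p.1 j : ℝ)) ∧
      (p.2 = false → ∑ j, a j * (p.1 j : ℝ) < w)) :
    ∃ (a : Fin d → ℝ) (w : ℝ),
      (∀ p ∈ S,
        (p.2 = true → w ≤ ∑ j, a j * (p.1 j : ℝ)) ∧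
        (p.2 = false → ∑ j, a j * (p.1 j : ℝ) < w)) ∧
      (∀ p ∈ S, ∀ y : Fin d → ℝ, (∑ j, a j * y j) = w →
        (1 : ℝ) / (2 * (d : ℝ) ^ 2 * (Nat.factorial d : ℝ) ^ (d ^ 3) * (X : ℝ) ^ (d ^ 6))
          ≤ Real.sqrt (∑ j, ((p.1 j : ℝ) - y j) ^ 2)) := by
  obtain ⟨a₀, w₀, h₀⟩ := hrealizable
  -- for `d = 0` or `X = 0` the claimed margin is `1 / 0 = 0`
  by_cases hdX : d = 0 ∨ X = 0
  · refine ⟨a₀, w₀, h₀, fun p _ y _ => ?_⟩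
    have h0 : 2 * (d : ℝ) ^ 2 * (d ! : ℝ) ^ d ^ 3 * (X : ℝ) ^ d ^ 6 = 0 := by
      rcases hdX with rfl | rfl <;> simp [Nat.factorial_ne_zero, em]
    rw [h0, div_zero]
    exact Real.sqrt_nonneg _
  obtain ⟨hd0, hX0⟩ := not_or.mp hdX
  have hX : 1 ≤ X := Nat.one_le_iff_ne_zero.mpr hX0
  obtain ⟨a, w, hgap, ha⟩ : ∃ a w, HasUnitGap S a w ∧
      ∀ j, |a j| ≤ 2 * d * (d ! : ℝ) ^ d ^ 3 * (X : ℝ) ^ d ^ 6 := by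
    rcases (by omega : d = 1 ∨ 2 ≤ d) with rfl | hd
    · obtain ⟨a, w, hgap, ha⟩ := Separates.exists_hasUnitGap_abs_le_two h₀
      exact ⟨a, w, hgap, fun j => (ha j).trans (by simpa using hX)⟩
    · obtain ⟨a₁, w₁, h₁⟩ := Separates.exists_hasUnitGap h₀
      obtain ⟨a, w, hgap, ha⟩ := h₁.exists_bounded hX hgrid
      exact ⟨a, w, hgap, fun j => (ha j).trans
        (by exact_mod_cast succ_mul_factorial_mul_pow_le hd hX)⟩
  refine ⟨a, w, hgap.separates, fun p hp y hy => ?_⟩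
  calc _ = 1 / (Fintype.card (Fin d) * (2 * d * (d ! : ℝ) ^ d ^ 3 * (X : ℝ) ^ d ^ 6)) := by
        rw [Fintype.card_fin]; ring
    _ ≤ _ := one_div_le_sqrt_of_one_le_abs_dotProduct ha (hgap.one_le_abs_dotProduct_sub hp hy)
end

section
/- Let Q : ℝ → ℝ be a quasi-concave function (Q(ℓ) ≥ min(Q(i),Q(j)) for i < ℓ < j) whose level sets {x : Q(x) ≥ k} are closed, and suppose Q is not constant and attains its maximum. Then there exists a decreasing point x* attaining the maximum of Q: a point x* such that either Q(x) < Q(x*) for all x < x*, or Q(x) < Q(x*) for all x > x*. -/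
/-- A non-constant quasi-concave function on `ℝ` with closed superlevel sets that
attains its maximum has a maximizing decreasing point: a maximizer `x*` such that `Q`
is strictly smaller everywhere on one side of `x*`. -/
theorem stmt_9 (Q : ℝ → ℝ)
    (hquasi : ∀ i ℓ j : ℝ, i < ℓ → ℓ < j → min (Q i) (Q j) ≤ Q ℓ)
    (hclosed : ∀ k : ℝ, IsClosed {x : ℝ | k ≤ Q x})
    (hnonconst : ∃ a b : ℝ, Q a ≠ Q b)
    (hmax : ∃ x₀ : ℝ, ∀ x : ℝ, Q x ≤ Q x₀) :
    ∃ xstar : ℝ, (∀ x : ℝ, Q x ≤ Q xstar) ∧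
      ((∀ x : ℝ, x < xstar → Q x < Q xstar) ∨ (∀ x : ℝ, xstar < x → Q x < Q xstar)) := by
  obtain ⟨x₀, hx₀⟩ := hmax
  set S : Set ℝ := {x : ℝ | Q x₀ ≤ Q x} with hS
  have hSne : S.Nonempty := ⟨x₀, by simp [hS]⟩
  have hSc : IsClosed S := hclosed (Q x₀)
  -- there is a point with strictly smaller value
  obtain ⟨a, b, hab⟩ := hnonconst
  have hy : ∃ y, Q y < Q x₀ := by
    rcases lt_or_eq_of_le (hx₀ a) with h | h
    · exact ⟨a, h⟩
    rcases lt_or_eq_of_le (hx₀ b) with h' | h'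
    · exact ⟨b, h'⟩
    · exact absurd (h.trans h'.symm) hab
  obtain ⟨y, hyQ⟩ := hy
  by_cases hbb : BddBelow S
  · refine ⟨sInf S, ?_, Or.inl ?_⟩
    · intro x
      have hmem : sInf S ∈ S := hSc.csInf_mem hSne hbb
      exact (hx₀ x).trans hmem
    · intro x hx
      have hmem : sInf S ∈ S := hSc.csInf_mem hSne hbb
      by_contra hcon
      push_neg at hcon
      have hxS : x ∈ S := le_trans hmem hcon
      exact absurd (csInf_le hbb hxS) (not_le.mpr hx)
  · have hba : BddAbove S := by
      by_contra hba
      rw [not_bddAbove_iff] at hba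
      rw [not_bddBelow_iff] at hbb
      obtain ⟨p, hpS, hpy⟩ := hbb y
      obtain ⟨q, hqS, hyq⟩ := hba y
      have := hquasi p y q hpy hyq
      have : Q x₀ ≤ Q y := le_trans (le_min hpS hqS) this
      exact absurd this (not_le.mpr hyQ)
    refine ⟨sSup S, ?_, Or.inr ?_⟩
    · intro x
      have hmem : sSup S ∈ S := hSc.csSup_mem hSne hba
      exact (hx₀ x).trans hmem
    · intro x hx
      have hmem : sSup S ∈ S := hSc.csSup_mem hSne hba
      by_contra hcon
      push_neg at hcon
      have hxS : x ∈ S := le_trans hmem hcon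
      exact absurd (le_csSup hba hxS) (not_le.mpr hx)
end

section
/- Let c, h : ℝ^d → {−1,1} be halfspace classifiers (h = c_{a,w} outputs 1 iff ⟨a,x⟩ ≥ w), let μ be a distribution over ℝ^d, let A ⊂ ℝ be a finite set symmetric about 0 (z ∈ A ⟺ −z ∈ A), and let μ̃ be the distribution of x + z where x ∼ μ and z has i.i.d. coordinates uniform on A. Suppose that for every x ∈ ℝ^d with c(x) ≠ h(x) and every z ∈ A^d, both c(x+z) = c(x) holds. Then error_{μ̃}(c,h) ≥ (1/2)·error_μ(c,h), where error_ν(c,h) = Pr_{x∼ν}[c(x) ≠ h(x)]. -/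
open MeasureTheory

/-- Noise stability of halfspace disagreement: if `h` is a halfspace classifier, the
noise coordinate set `A` is symmetric about `0`, and `c` is unchanged by the noise at
every disagreement point, then the disagreement probability under the noisy
distribution (average over noise vectors `z ∈ A^d` of `μ`-probability of disagreement
at `x + z`) is at least half the disagreement probability under `μ`. -/
theorem stmt_13 {d : ℕ} (μ : Measure (Fin d → ℝ)) [IsProbabilityMeasure μ]
    (A : Finset ℝ) (hA : A.Nonempty) (hsym : ∀ t : ℝ, t ∈ A ↔ -t ∈ A)
    (c h : (Fin d → ℝ) → Bool) (hc : Measurable c)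
    (a : Fin d → ℝ) (w : ℝ) (hh : ∀ x, h x = true ↔ w ≤ ∑ j, a j * x j)
    (hstable : ∀ x : Fin d → ℝ, c x ≠ h x →
      ∀ z : Fin d → ℝ, (∀ j, z j ∈ A) → c (x + z) = c x) :
    (μ {x | c x ≠ h x}).toReal / 2 ≤
      (∑ z ∈ Fintype.piFinset (fun _ : Fin d => A),
        (μ {x | c (x + z) ≠ h (x + z)}).toReal) / ((A.card : ℝ) ^ d) := by
  classical
  set S : Set (Fin d → ℝ) := {x | c x ≠ h x} with hS
  set P := Fintype.piFinset (fun _ : Fin d => A) with hP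
  -- T z : disagreement points where h is stable under adding z
  set T : (Fin d → ℝ) → Set (Fin d → ℝ) := fun z =>
    {x | c x ≠ h x ∧ (if h x then 0 ≤ ∑ j, a j * z j else ∑ j, a j * z j ≤ 0)} with hT
  have hsumadd : ∀ x z : Fin d → ℝ,
      (∑ j, a j * (x + z) j) = (∑ j, a j * x j) + ∑ j, a j * z j := by
    intro x z
    rw [← Finset.sum_add_distrib]
    exact Finset.sum_congr rfl fun j _ => by simp [mul_add]
  have hsumneg : ∀ z : Fin d → ℝ, (∑ j, a j * (-z) j) = -∑ j, a j * z j := by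
    intro z
    rw [← Finset.sum_neg_distrib]
    exact Finset.sum_congr rfl fun j _ => by simp
  -- h is stable on T z
  have hTsub : ∀ z ∈ P, T z ⊆ {x | c (x + z) ≠ h (x + z)} := by
    intro z hz x hx
    obtain ⟨hxd, hxs⟩ := hx
    have hzA : ∀ j, z j ∈ A := fun j => Fintype.mem_piFinset.mp hz j
    have hcz : c (x + z) = c x := hstable x hxd z hzA
    have hhz : h (x + z) = h x := by
      by_cases hb : h x = true
      · rw [hb] at hxs ⊢
        simp only [if_true] at hxs
        have : w ≤ ∑ j, a j * x j := (hh x).mp hb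
        exact (hh (x + z)).mpr (by rw [hsumadd]; linarith)
      · have hb' : h x = false := Bool.not_eq_true _ ▸ Bool.eq_false_iff.mpr (by simpa using hb)
        rw [hb'] at hxs ⊢
        rw [if_neg (by simp)] at hxs
        have : ¬ w ≤ ∑ j, a j * x j := fun hw => hb ((hh x).mpr hw)
        have : ¬ w ≤ ∑ j, a j * (x + z) j := by rw [hsumadd]; push_neg at this ⊢; linarith
        exact Bool.eq_false_iff.mpr (fun ht => this ((hh (x + z)).mp ht))
    show c (x + z) ≠ h (x + z)
    rw [hcz, hhz]; exact hxd
  -- covering: S ⊆ T z ∪ T (-z)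
  have hcover : ∀ z : Fin d → ℝ, S ⊆ T z ∪ T (-z) := by
    intro z x hx
    rcases le_total 0 (∑ j, a j * z j) with hle | hle
    · by_cases hb : h x = true
      · left; refine ⟨hx, ?_⟩; rw [hb, if_pos rfl]; exact hle
      · right; refine ⟨hx, ?_⟩
        have hb' : h x = false := by simpa using hb
        rw [hb', if_neg (by simp), hsumneg]; linarith
    · by_cases hb : h x = true
      · right; refine ⟨hx, ?_⟩; rw [hb, if_pos rfl, hsumneg]; linarith
      · left; refine ⟨hx, ?_⟩
        have hb' : h x = false := by simpa using hb
        rw [hb', if_neg (by simp)]; exact hle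
  -- key pointwise bound in ℝ
  have key : ∀ z ∈ P, (μ S).toReal ≤
      (μ {x | c (x + z) ≠ h (x + z)}).toReal +
      (μ {x | c (x + -z) ≠ h (x + -z)}).toReal := by
    intro z hz
    have hznegP : -z ∈ P := by
      rw [Fintype.mem_piFinset]
      intro j
      exact (hsym (z j)).mp (Fintype.mem_piFinset.mp hz j)
    have h1 : μ S ≤ μ (T z) + μ (T (-z)) :=
      le_trans (measure_mono (hcover z)) (measure_union_le _ _)
    have h2 : μ (T z) ≤ μ {x | c (x + z) ≠ h (x + z)} := measure_mono (hTsub z hz)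
    have h3 : μ (T (-z)) ≤ μ {x | c (x + -z) ≠ h (x + -z)} := measure_mono (hTsub (-z) hznegP)
    have h4 : μ S ≤ μ {x | c (x + z) ≠ h (x + z)} + μ {x | c (x + -z) ≠ h (x + -z)} :=
      le_trans h1 (add_le_add h2 h3)
    have := ENNReal.toReal_mono (by finiteness) h4
    rwa [ENNReal.toReal_add (measure_ne_top _ _) (measure_ne_top _ _)] at this
  -- negation is a bijection of P
  have hnegsum : (∑ z ∈ P, (μ {x | c (x + -z) ≠ h (x + -z)}).toReal)
      = ∑ z ∈ P, (μ {x | c (x + z) ≠ h (x + z)}).toReal := by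
    apply Finset.sum_nbij' (fun z => -z) (fun z => -z)
    · intro z hz; rw [Fintype.mem_piFinset]; intro j
      exact (hsym (z j)).mp (Fintype.mem_piFinset.mp hz j)
    · intro z hz; rw [Fintype.mem_piFinset]; intro j
      exact (hsym (z j)).mp (Fintype.mem_piFinset.mp hz j)
    · intro z _; simp
    · intro z _; simp
    · intro z _; simp
  have hcardP : (P.card : ℝ) = (A.card : ℝ) ^ d := by
    rw [hP, Fintype.card_piFinset]
    simp
  have hApos : 0 < (A.card : ℝ) ^ d := by
    apply pow_pos
    exact_mod_cast Finset.card_pos.mpr hA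
  rw [div_le_div_iff₀ (by norm_num) hApos]
  have hsumbound : (P.card : ℝ) * (μ S).toReal ≤
      2 * ∑ z ∈ P, (μ {x | c (x + z) ≠ h (x + z)}).toReal := by
    have := Finset.sum_le_sum key
    rw [Finset.sum_const, nsmul_eq_mul, Finset.sum_add_distrib, hnegsum] at this
    linarith
  calc (μ S).toReal * (A.card : ℝ) ^ d = (P.card : ℝ) * (μ S).toReal := by
        rw [hcardP]; ring
    _ ≤ 2 * ∑ z ∈ P, (μ {x | c (x + z) ≠ h (x + z)}).toReal := hsumbound
    _ = (∑ z ∈ P, (μ {x | c (x + z) ≠ h (x + z)}).toReal) * 2 := by ring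
end
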